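/- arXiv:2106.05041 — 5 statements merged into one kernel-verified Lean document; each statement's English description precedes it below -/
import Mathlib

section
/- The fPCL operators ⊕, ⊗ and ⊎ are associative and commutative up to fPCL-equivalence; in particular, for all fPCL formulas ζ₁, ζ₂, ζ₃ over a finite set of ports P, ζ₁ ⊎ (ζ₂ ⊎ ζ₃) ≡ (ζ₁ ⊎ ζ₂) ⊎ ζ₃ and ζ₁ ⊎ ζ₂ ≡ ζ₂ ⊎ ζ₁. -/
/-- A De Morgan algebra: a bounded distributive lattice equipped with a
complement map satisfying involution and the De Morgan laws. -/
class DeMorganAlg (K : Type) extends DistribLattice K, BoundedOrder K where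
  compl : K → K
  compl_compl : ∀ k : K, compl (compl k) = k
  compl_sup : ∀ k k' : K, compl (k ⊔ k') = compl k ⊓ compl k'
  compl_inf : ∀ k k' : K, compl (k ⊓ k') = compl k ⊔ compl k'

/-- fPIL formulas over the set of ports `P`. -/
inductive fPIL (P : Type) : Type where
  | tt : fPIL P
  | port : P → fPIL P
  | fnot : fPIL P → fPIL P
  | fdisj : fPIL P → fPIL P → fPIL P

/-- Fuzzy conjunction of fPIL formulas. -/
def fPIL.fconj {P : Type} (φ₁ φ₂ : fPIL P) : fPIL P :=
  .fnot (.fdisj (.fnot φ₁) (.fnot φ₂))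

/-- The fPIL formula `false`. -/
def fPIL.ff {P : Type} : fPIL P := .fnot .tt

/-- K-fuzzy interactions on `P`: maps `a : P → K` with `a p ≠ 0` for some port `p`. -/
def fI (P K : Type) [DeMorganAlg K] : Type := {a : P → K // ∃ p : P, a p ≠ ⊥}

/-- Semantics of fPIL formulas. -/
def fPIL.sem {P K : Type} [DeMorganAlg K] : fPIL P → fI P K → K
  | .tt, _ => ⊤
  | .port p, a => a.1 p
  | .fnot φ, a => DeMorganAlg.compl (φ.sem a)
  | .fdisj φ₁ φ₂, a => φ₁.sem a ⊔ φ₂.sem a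

/-- Equivalence of fPIL formulas: equal semantics over every De Morgan algebra
and every fuzzy interaction. -/
def pilEquiv {P : Type} (φ₁ φ₂ : fPIL P) : Prop :=
  ∀ (K : Type) [DeMorganAlg K] (a : fI P K), φ₁.sem a = φ₂.sem a
noncomputable instance {P K : Type} [DeMorganAlg K] : DecidableEq (fI P K) :=
  Classical.decEq _

/-- fPCL formulas over the set of ports `P`. -/
inductive fPCL (P : Type) : Type where
  | pil : fPIL P → fPCL P
  | cneg : fPCL P → fPCL P
  | oplus : fPCL P → fPCL P → fPCL P
  | coal : fPCL P → fPCL P → fPCL P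

/-- Fuzzy conjunction `⊗` of fPCL formulas. -/
def fPCL.otimes {P : Type} (ζ₁ ζ₂ : fPCL P) : fPCL P :=
  .cneg (.oplus (.cneg ζ₁) (.cneg ζ₂))

/-- The closure operator `~ζ := ζ ⊎ true`. -/
def fPCL.closure {P : Type} (ζ : fPCL P) : fPCL P := .coal ζ (.pil .tt)

/-- Semantics of fPCL formulas on finite sets of fuzzy interactions. -/
noncomputable def fPCL.sem {P K : Type} [DeMorganAlg K] :
    fPCL P → Finset (fI P K) → K
  | .pil φ, γ => γ.inf fun a => φ.sem a
  | .cneg ζ, γ => DeMorganAlg.compl (ζ.sem γ)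
  | .oplus ζ₁ ζ₂, γ => ζ₁.sem γ ⊔ ζ₂.sem γ
  | .coal ζ₁ ζ₂, γ =>
      ((γ.powerset ×ˢ γ.powerset).filter fun q =>
          q.1.Nonempty ∧ q.2.Nonempty ∧ q.1 ∪ q.2 = γ).sup fun q =>
        ζ₁.sem q.1 ⊓ ζ₂.sem q.2

/-- Equivalence of fPCL formulas: equal semantics over every De Morgan algebra
and every nonempty finite set of fuzzy interactions. -/
def pclEquiv {P : Type} (ζ₁ ζ₂ : fPCL P) : Prop :=
  ∀ (K : Type) [DeMorganAlg K] (γ : Finset (fI P K)), γ.Nonempty →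
    ζ₁.sem γ = ζ₂.sem γ

/-!
The coalescing operator `⊎` is the sup-over-covers convolution `coverSup` of the semantics of
its operands, and this convolution is commutative and associative on functions `Finset α → L`
into any distributive lattice: a cover `γ = γ₁ ∪ δ` together with a cover `δ = γ₂ ∪ γ₃`
regroups into the cover `γ = (γ₁ ∪ γ₂) ∪ γ₃`, which gives one inequality, and applying that
inequality to the reversed triple and commuting every convolution gives the converse. The statements for `⊕` and `⊗` are associativity and
commutativity of `⊔` and `⊓`.
-/

namespace Finset

variable {α : Type*} [DecidableEq α]

def covers (γ : Finset α) : Finset (Finset α × Finset α) :=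
  (γ.powerset ×ˢ γ.powerset).filter fun q => q.1.Nonempty ∧ q.2.Nonempty ∧ q.1 ∪ q.2 = γ

theorem mem_covers {γ : Finset α} {q : Finset α × Finset α} :
    q ∈ γ.covers ↔ q.1.Nonempty ∧ q.2.Nonempty ∧ q.1 ∪ q.2 = γ := by
  simp only [covers, mem_filter, mem_product, mem_powerset, and_iff_right_iff_imp]
  rintro ⟨-, -, rfl⟩
  exact ⟨subset_union_left, subset_union_right⟩

end Finset

open Finset

section CoverSup

variable {α L : Type*} [DecidableEq α]

def coverSup [Lattice L] [OrderBot L] (f g : Finset α → L) (γ : Finset α) : L :=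
  γ.covers.sup fun q => f q.1 ⊓ g q.2

section Lattice

variable [Lattice L] [OrderBot L] {f g : Finset α → L}

theorem le_coverSup {γ₁ γ₂ : Finset α} (h₁ : γ₁.Nonempty) (h₂ : γ₂.Nonempty) :
    f γ₁ ⊓ g γ₂ ≤ coverSup f g (γ₁ ∪ γ₂) :=
  le_sup (f := fun q => f q.1 ⊓ g q.2) (b := (γ₁, γ₂)) (mem_covers.2 ⟨h₁, h₂, rfl⟩)

theorem coverSup_le {γ : Finset α} {c : L}
    (h : ∀ γ₁ γ₂, γ₁.Nonempty → γ₂.Nonempty → γ₁ ∪ γ₂ = γ → f γ₁ ⊓ g γ₂ ≤ c) :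
    coverSup f g γ ≤ c :=
  Finset.sup_le fun q hq => by
    obtain ⟨h₁, h₂, hγ⟩ := mem_covers.1 hq
    exact h q.1 q.2 h₁ h₂ hγ

theorem coverSup_le_swap (f g : Finset α → L) (γ : Finset α) :
    coverSup f g γ ≤ coverSup g f γ :=
  coverSup_le fun γ₁ γ₂ h₁ h₂ hγ => by
    rw [inf_comm, ← hγ, union_comm]
    exact le_coverSup h₂ h₁

theorem coverSup_comm (f g : Finset α → L) : coverSup f g = coverSup g f :=
  funext fun γ => le_antisymm (coverSup_le_swap f g γ) (coverSup_le_swap g f γ)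

end Lattice

variable [DistribLattice L] [OrderBot L]

theorem coverSup_assoc_le (f g h : Finset α → L) (γ : Finset α) :
    coverSup f (coverSup g h) γ ≤ coverSup (coverSup f g) h γ :=
  coverSup_le fun γ₁ δ h₁ _ hγ => by
    rw [coverSup, sup_inf_distrib_left]
    refine Finset.sup_le fun q hq => ?_
    obtain ⟨h₂, h₃, hδ⟩ := mem_covers.1 hq
    calc f γ₁ ⊓ (g q.1 ⊓ h q.2) = f γ₁ ⊓ g q.1 ⊓ h q.2 := (inf_assoc _ _ _).symm
      _ ≤ coverSup f g (γ₁ ∪ q.1) ⊓ h q.2 := inf_le_inf_right _ (le_coverSup h₁ h₂)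
      _ ≤ coverSup (coverSup f g) h (γ₁ ∪ q.1 ∪ q.2) :=
          le_coverSup (h₁.mono subset_union_left) h₃
      _ = coverSup (coverSup f g) h γ := by rw [union_assoc, hδ, hγ]

theorem coverSup_assoc (f g h : Finset α → L) :
    coverSup f (coverSup g h) = coverSup (coverSup f g) h := by
  refine funext fun γ => le_antisymm (coverSup_assoc_le f g h γ) ?_
  have mirrored := coverSup_assoc_le h g f γ
  rwa [coverSup_comm h, coverSup_comm g f, coverSup_comm (coverSup h g), coverSup_comm h g]
    at mirrored

end CoverSup

namespace fPCL

variable {P K : Type} [DeMorganAlg K]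

theorem sem_coal (ζ₁ ζ₂ : fPCL P) :
    (coal ζ₁ ζ₂).sem (K := K) = coverSup ζ₁.sem ζ₂.sem :=
  rfl

theorem sem_otimes (ζ₁ ζ₂ : fPCL P) (γ : Finset (fI P K)) :
    (ζ₁.otimes ζ₂).sem γ = ζ₁.sem γ ⊓ ζ₂.sem γ := by
  simp only [otimes, sem, DeMorganAlg.compl_sup, DeMorganAlg.compl_compl]

end fPCL

theorem fpcl_assoc_comm_general {P : Type} (ζ₁ ζ₂ ζ₃ : fPCL P) :
    pclEquiv (.oplus ζ₁ (.oplus ζ₂ ζ₃)) (.oplus (.oplus ζ₁ ζ₂) ζ₃) ∧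
    pclEquiv (.oplus ζ₁ ζ₂) (.oplus ζ₂ ζ₁) ∧
    pclEquiv (ζ₁.otimes (ζ₂.otimes ζ₃)) ((ζ₁.otimes ζ₂).otimes ζ₃) ∧
    pclEquiv (ζ₁.otimes ζ₂) (ζ₂.otimes ζ₁) ∧
    pclEquiv (.coal ζ₁ (.coal ζ₂ ζ₃)) (.coal (.coal ζ₁ ζ₂) ζ₃) ∧
    pclEquiv (.coal ζ₁ ζ₂) (.coal ζ₂ ζ₁) := by
  refine ⟨fun K _ γ _ => (sup_assoc _ _ _).symm, fun K _ γ _ => sup_comm _ _,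
    fun K _ γ _ => ?_, fun K _ γ _ => ?_, fun K _ γ _ => ?_, fun K _ γ _ => ?_⟩
  · simp only [fPCL.sem_otimes, inf_assoc]
  · simp only [fPCL.sem_otimes, inf_comm]
  · simp only [fPCL.sem_coal, coverSup_assoc]
  · simp only [fPCL.sem_coal, coverSup_comm ζ₁.sem]

/-- the fPCL operators `⊕`, `⊗` and `⊎` are associative and
commutative up to fPCL-equivalence. -/
theorem fpcl_assoc_comm {P : Type} [Fintype P] (ζ₁ ζ₂ ζ₃ : fPCL P) :
    pclEquiv (.oplus ζ₁ (.oplus ζ₂ ζ₃)) (.oplus (.oplus ζ₁ ζ₂) ζ₃) ∧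
    pclEquiv (.oplus ζ₁ ζ₂) (.oplus ζ₂ ζ₁) ∧
    pclEquiv (ζ₁.otimes (ζ₂.otimes ζ₃)) ((ζ₁.otimes ζ₂).otimes ζ₃) ∧
    pclEquiv (ζ₁.otimes ζ₂) (ζ₂.otimes ζ₁) ∧
    pclEquiv (.coal ζ₁ (.coal ζ₂ ζ₃)) (.coal (.coal ζ₁ ζ₂) ζ₃) ∧
    pclEquiv (.coal ζ₁ ζ₂) (.coal ζ₂ ζ₁) :=
  fpcl_assoc_comm_general ζ₁ ζ₂ ζ₃
end

section
/- For all fPCL formulas ζ, ζ₁, ζ₂ over a finite set of ports P, the coalescing operator distributes over fuzzy disjunction: ζ ⊎ (ζ₁ ⊕ ζ₂) ≡ (ζ ⊎ ζ₁) ⊕ (ζ ⊎ ζ₂). -/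
theorem fpcl_coal_distrib_oplus_general {P : Type} (ζ ζ₁ ζ₂ : fPCL P) :
    pclEquiv (.coal ζ (.oplus ζ₁ ζ₂)) (.oplus (.coal ζ ζ₁) (.coal ζ ζ₂)) := by
  intro K _ γ _
  simp only [fPCL.sem, inf_sup_left]
  exact Finset.sup_sup

/-- the coalescing operator distributes over fuzzy disjunction:
`ζ ⊎ (ζ₁ ⊕ ζ₂) ≡ (ζ ⊎ ζ₁) ⊕ (ζ ⊎ ζ₂)`. -/
theorem fpcl_coal_distrib_oplus {P : Type} [Fintype P] (ζ ζ₁ ζ₂ : fPCL P) :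
    pclEquiv (.coal ζ (.oplus ζ₁ ζ₂)) (.oplus (.coal ζ ζ₁) (.coal ζ ζ₂)) :=
  fpcl_coal_distrib_oplus_general ζ ζ₁ ζ₂
end

section
/- For every fPIL formula φ over a finite set of ports P, the coalescing operator is idempotent on fPIL formulas: φ ⊎ φ ≡ φ as fPCL formulas. -/
namespace Finset

variable {α : Type*} [DecidableEq α]

def nonemptyCovers (γ : Finset α) : Finset (Finset α × Finset α) :=
  (γ.powerset ×ˢ γ.powerset).filter fun q => q.1.Nonempty ∧ q.2.Nonempty ∧ q.1 ∪ q.2 = γ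

theorem mem_nonemptyCovers {γ : Finset α} {q : Finset α × Finset α} :
    q ∈ γ.nonemptyCovers ↔ q.1.Nonempty ∧ q.2.Nonempty ∧ q.1 ∪ q.2 = γ := by
  simp only [nonemptyCovers, mem_filter, mem_product, mem_powerset, and_iff_right_iff_imp]
  rintro ⟨-, -, rfl⟩
  exact ⟨subset_union_left, subset_union_right⟩

theorem sup_nonemptyCovers_inf_inf {β : Type*} [Lattice β] [BoundedOrder β]
    {γ : Finset α} (hγ : γ.Nonempty) (f : α → β) :
    (γ.nonemptyCovers.sup fun q => q.1.inf f ⊓ q.2.inf f) = γ.inf f := by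
  refine le_antisymm (Finset.sup_le fun q hq => ?_) ?_
  · obtain ⟨-, -, hcover⟩ := mem_nonemptyCovers.1 hq
    rw [← inf_union, hcover]
  · calc γ.inf f = γ.inf f ⊓ γ.inf f := inf_idem _ |>.symm
      _ ≤ _ := le_sup (f := fun q => q.1.inf f ⊓ q.2.inf f) (b := (γ, γ))
        (mem_nonemptyCovers.2 ⟨hγ, hγ, union_self γ⟩)

end Finset

theorem fPCL.sem_coal_s10 {P K : Type} [DeMorganAlg K] (ζ₁ ζ₂ : fPCL P) (γ : Finset (fI P K)) :
    (fPCL.coal ζ₁ ζ₂).sem γ = γ.nonemptyCovers.sup fun q => ζ₁.sem q.1 ⊓ ζ₂.sem q.2 :=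
  rfl

theorem fPCL.sem_pil {P K : Type} [DeMorganAlg K] (φ : fPIL P) (γ : Finset (fI P K)) :
    (fPCL.pil φ).sem γ = γ.inf φ.sem :=
  rfl

theorem fpil_coal_idem_general {P : Type} (φ : fPIL P) :
    pclEquiv (.coal (.pil φ) (.pil φ)) (.pil φ) := by
  intro K _ γ hγ
  simp only [fPCL.sem_coal_s10, fPCL.sem_pil]
  exact Finset.sup_nonemptyCovers_inf_inf hγ φ.sem

/-- the coalescing operator is idempotent on fPIL formulas:
`φ ⊎ φ ≡ φ` as fPCL formulas. -/
theorem fpil_coal_idem {P : Type} [Fintype P] (φ : fPIL P) :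
    pclEquiv (.coal (.pil φ) (.pil φ)) (.pil φ) :=
  fpil_coal_idem_general φ
end

section
/- For every fPIL formula φ over a finite set of ports P, the fPCL negation of the closure of φ coincides with the fPIL negation of φ: ¬~φ ≡ !φ as fPCL formulas; equivalently, for every De Morgan algebra K and every γ ∈ fC(P,K), the complement of ⋁_{γ'⊆γ, γ' nonempty} ⋀_{a∈γ'} ‖φ‖(a) equals ⋀_{a∈γ} of the complement of ‖φ‖(a). -/
/-! Every `⋀_{a∈γ'} ‖φ‖(a)` with `∅ ≠ γ' ⊆ γ` lies below `⋁_{a∈γ} ‖φ‖(a)`, and the singletons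
`γ' = {a}` attain each `‖φ‖(a)`; so both the join over nonempty subsets and the coalition with
`true` (whose second component contributes `⊤`) collapse to `⋁_{a∈γ} ‖φ‖(a)`. De Morgan then
turns the complement of this join into the meet of the complements. -/

theorem Finset.sup_inf_eq_sup_of_singletons {ι α K : Type*} [Lattice K] [BoundedOrder K]
    (S : Finset ι) (t : ι → Finset α) (γ : Finset α) (f : α → K)
    (hsub : ∀ i ∈ S, (t i).Nonempty ∧ t i ⊆ γ)
    (hsingle : ∀ a ∈ γ, ∃ i ∈ S, t i = {a}) :
    S.sup (fun i => (t i).inf f) = γ.sup f := by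
  apply le_antisymm
  · refine Finset.sup_le fun i hi => ?_
    obtain ⟨⟨a, ha⟩, hγ⟩ := hsub i hi
    exact (Finset.inf_le ha).trans (Finset.le_sup (hγ ha))
  · refine Finset.sup_le fun a ha => ?_
    obtain ⟨i, hi, hta⟩ := hsingle a ha
    calc f a = (t i).inf f := by rw [hta, Finset.inf_singleton]
      _ ≤ S.sup (fun i => (t i).inf f) := Finset.le_sup (f := fun i => (t i).inf f) hi

theorem Finset.sup_powerset_nonempty_inf {α K : Type*} [DecidableEq α] [Lattice K]
    [BoundedOrder K] (γ : Finset α) (f : α → K) :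
    ((γ.powerset.filter fun γ' => γ'.Nonempty).sup fun γ' => γ'.inf f) = γ.sup f :=
  Finset.sup_inf_eq_sup_of_singletons _ id γ f
    (fun γ' hγ' => by
      rw [Finset.mem_filter, Finset.mem_powerset] at hγ'
      exact ⟨hγ'.2, hγ'.1⟩)
    (fun a ha => ⟨{a}, by simpa using ha, rfl⟩)

namespace DeMorganAlg

variable {K : Type} [DeMorganAlg K]

theorem compl_bot : compl (⊥ : K) = ⊤ :=
  calc compl (⊥ : K) = compl (⊥ ⊓ compl ⊤) := by rw [bot_inf_eq]
    _ = ⊤ := by rw [compl_inf, compl_compl, sup_top_eq]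

theorem compl_finset_sup {α : Type*} (s : Finset α) (f : α → K) :
    compl (s.sup f) = s.inf fun a => compl (f a) := by
  classical
  induction s using Finset.induction with
  | empty => exact compl_bot
  | insert a s _ ih => rw [Finset.sup_insert, Finset.inf_insert, compl_sup, ih]

end DeMorganAlg

theorem fPCL.sem_closure_pil {P K : Type} [DeMorganAlg K] (φ : fPIL P) (γ : Finset (fI P K)) :
    (fPCL.closure (.pil φ)).sem γ = γ.sup φ.sem := by
  simp only [fPCL.closure, fPCL.sem, fPIL.sem, Finset.inf_top, inf_top_eq]
  refine Finset.sup_inf_eq_sup_of_singletons _ Prod.fst γ _ (fun q hq => ?_) (fun a ha => ?_)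
  · simp only [Finset.mem_filter, Finset.mem_product, Finset.mem_powerset] at hq
    exact ⟨hq.2.1, hq.1.1⟩
  · refine ⟨({a}, γ), ?_, rfl⟩
    simp only [Finset.mem_filter, Finset.mem_product, Finset.mem_powerset,
      Finset.singleton_subset_iff, Finset.singleton_nonempty, Finset.union_eq_right]
    exact ⟨⟨ha, subset_rfl⟩, trivial, ⟨a, ha⟩, ha⟩

theorem fpcl_neg_closure_general {P : Type} (φ : fPIL P) :
    pclEquiv (.cneg (fPCL.closure (.pil φ))) (.pil (.fnot φ)) ∧
    (∀ (K : Type) [DeMorganAlg K] (γ : Finset (fI P K)), γ.Nonempty →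
      DeMorganAlg.compl
          ((γ.powerset.filter fun γ' => γ'.Nonempty).sup fun γ' =>
            γ'.inf fun a => φ.sem a) =
        γ.inf fun a => DeMorganAlg.compl (φ.sem a)) := by
  refine ⟨fun K _ γ _ => ?_, fun K _ γ _ => ?_⟩
  · exact (congrArg DeMorganAlg.compl (fPCL.sem_closure_pil φ γ)).trans
      (DeMorganAlg.compl_finset_sup γ φ.sem)
  · rw [Finset.sup_powerset_nonempty_inf, DeMorganAlg.compl_finset_sup]

/-- `¬~φ ≡ !φ` as fPCL formulas; equivalently, for every De Morgan
algebra `K` and every `γ ∈ fC(P,K)`, the complement of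
`⋁_{γ'⊆γ, γ' nonempty} ⋀_{a∈γ'} ‖φ‖(a)` equals `⋀_{a∈γ}` of the complement of `‖φ‖(a)`. -/
theorem fpcl_neg_closure {P : Type} [Fintype P] (φ : fPIL P) :
    pclEquiv (.cneg (fPCL.closure (.pil φ))) (.pil (.fnot φ)) ∧
    (∀ (K : Type) [DeMorganAlg K] (γ : Finset (fI P K)), γ.Nonempty →
      DeMorganAlg.compl
          ((γ.powerset.filter fun γ' => γ'.Nonempty).sup fun γ' =>
            γ'.inf fun a => φ.sem a) =
        γ.inf fun a => DeMorganAlg.compl (φ.sem a)) :=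
  fpcl_neg_closure_general φ
end

section
/- For every fPIL formula φ over a finite set of ports P, the fPCL negation of φ coincides with the closure of the fPIL negation of φ: ¬φ ≡ ~(!φ) as fPCL formulas. -/
namespace DeMorganAlg

variable {K : Type} [DeMorganAlg K]

/-- `compl ⊤` lies below every `compl k` since `compl k = compl (k ⊓ ⊤) = compl k ⊔ compl ⊤`;
take `k = compl ⊥`. -/
theorem compl_top : compl (⊤ : K) = ⊥ := by
  refine le_bot_iff.mp ?_
  calc compl (⊤ : K) ≤ compl (compl ⊥) ⊔ compl ⊤ := le_sup_right
    _ = compl (compl ⊥ ⊓ ⊤) := (compl_inf _ _).symm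
    _ = ⊥ := by rw [inf_top_eq, compl_compl]

theorem compl_finset_inf {α : Type} (s : Finset α) (f : α → K) :
    compl (s.inf f) = s.sup fun a => compl (f a) := by
  classical
  induction s using Finset.induction_on with
  | empty => exact compl_top
  | insert a s _ ih => rw [Finset.inf_insert, Finset.sup_insert, compl_inf, ih]

end DeMorganAlg

namespace fPCL

variable {P K : Type} [DeMorganAlg K]

/-- The split `({a}, γ)` realises the summand of each `a ∈ γ`. -/
theorem sem_closure_pil_s12 (ψ : fPIL P) (γ : Finset (fI P K)) :
    (pil ψ).closure.sem γ = γ.sup ψ.sem := by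
  simp only [closure, sem, fPIL.sem, Finset.inf_top, inf_top_eq]
  apply le_antisymm
  · refine Finset.sup_le fun q hq => ?_
    simp only [Finset.mem_filter, Finset.mem_product, Finset.mem_powerset] at hq
    obtain ⟨⟨hq₁, -⟩, ⟨a, ha⟩, -⟩ := hq
    exact (Finset.inf_le ha).trans (Finset.le_sup (hq₁ ha))
  · refine Finset.sup_le fun a ha => ?_
    have hsplit : (({a} : Finset (fI P K)), γ) ∈ (γ.powerset ×ˢ γ.powerset).filter
        fun q => q.1.Nonempty ∧ q.2.Nonempty ∧ q.1 ∪ q.2 = γ := by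
      simp [ha, Finset.insert_eq_of_mem ha, show γ.Nonempty from ⟨a, ha⟩]
    simpa using Finset.le_sup (f := fun q => q.1.inf ψ.sem) hsplit

end fPCL

theorem fpcl_neg_eq_closure_fnot_general {P : Type} (φ : fPIL P) :
    pclEquiv (.cneg (.pil φ)) (fPCL.closure (.pil (.fnot φ))) := by
  intro K _ γ _
  rw [fPCL.sem_closure_pil_s12]
  exact DeMorganAlg.compl_finset_inf γ φ.sem

/-- the fPCL negation of an fPIL formula coincides with the
closure of its fPIL negation: `¬φ ≡ ~(!φ)` as fPCL formulas. -/
theorem fpcl_neg_eq_closure_fnot {P : Type} [Fintype P] (φ : fPIL P) :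
    pclEquiv (.cneg (.pil φ)) (fPCL.closure (.pil (.fnot φ))) :=
  fpcl_neg_eq_closure_fnot_general φ
end
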